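/- arXiv:2012.03560 — 6 statements merged into one kernel-verified Lean document; each statement's English description precedes it below -/
import Mathlib

section
/- For every index i with N/2+1 ≤ i ≤ N one has Θ_i ≤ 2·max{σ/α, 1}·(ψ(1 − t_i) − ψ(1 − t_{i−1})); in particular each Θ_i is bounded by a fixed multiple (depending only on σ/α) of the increment of the mesh characterizing function ψ over the corresponding subinterval. -/
/-!
On `[0, 1/2]` the function `φ` is increasing, so with `d = φ(1 - t_{i-1}) - φ(1 - t_i) ≥ 0` and
`c = σ/α` the claim reads `min (c d) 1 · e^{-x} ≤ 2 max c 1 · (e^{-x} - e^{-x-d})`, i.e.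
`min (c d) 1 ≤ 2 max c 1 · (1 - e^{-d})`. This follows from `min (c d) 1 ≤ max c 1 · min d 1`
and `min d 1 ≤ 2 d / (1 + d) ≤ 2 (1 - e^{-d})`, the last step being `e^d ≥ 1 + d`.
-/

open Real Set

lemma div_one_add_le_one_sub_exp_neg {d : ℝ} (hd : 0 ≤ d) : d / (1 + d) ≤ 1 - exp (-d) := by
  have h : exp (-d) ≤ 1 / (1 + d) := by
    rw [exp_neg, ← one_div]
    exact one_div_le_one_div_of_le (by linarith) (by linarith [add_one_le_exp d])
  have hsplit : d / (1 + d) = 1 - 1 / (1 + d) := by field_simp; ring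
  linarith

lemma min_le_two_mul_one_sub_exp_neg {d : ℝ} (hd : 0 ≤ d) : min d 1 ≤ 2 * (1 - exp (-d)) := by
  have hpos : 0 < 1 + d := by linarith
  calc min d 1 ≤ 2 * (d / (1 + d)) := by
        rw [mul_div_assoc', le_div_iff₀ hpos]
        rcases le_total d 1 with h | h
        · rw [min_eq_left h]; nlinarith
        · rw [min_eq_right h]; linarith
    _ ≤ 2 * (1 - exp (-d)) := by gcongr; exact div_one_add_le_one_sub_exp_neg hd

lemma min_mul_le_max_mul_min (c : ℝ) {d : ℝ} (hd : 0 ≤ d) :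
    min (c * d) 1 ≤ max c 1 * min d 1 := by
  rcases le_total d 1 with h | h
  · rw [min_eq_left h]
    exact (min_le_left _ _).trans (mul_le_mul_of_nonneg_right (le_max_left _ _) hd)
  · rw [min_eq_right h, mul_one]
    exact (min_le_right _ _).trans (le_max_right _ _)

lemma min_mul_sub_mul_exp_neg_le (c : ℝ) {x y : ℝ} (hxy : x ≤ y) :
    min (c * (y - x)) 1 * exp (-x) ≤ 2 * max c 1 * (exp (-x) - exp (-y)) := by
  have hd : 0 ≤ y - x := sub_nonneg.2 hxy
  have hexp : exp (-y) = exp (-x) * exp (-(y - x)) := by rw [← exp_add]; ring_nf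
  have hmax : 0 ≤ max c 1 := zero_le_one.trans (le_max_right _ _)
  calc min (c * (y - x)) 1 * exp (-x)
      ≤ max c 1 * (2 * (1 - exp (-(y - x)))) * exp (-x) := by
        gcongr
        exact (min_mul_le_max_mul_min c hd).trans
          (mul_le_mul_of_nonneg_left (min_le_two_mul_one_sub_exp_neg hd) hmax)
    _ = 2 * max c 1 * (exp (-x) - exp (-y)) := by rw [hexp]; ring

lemma monotoneOn_of_forall_hasDerivAt_nonneg {D : Set ℝ} (hD : Convex ℝ D) {f f' : ℝ → ℝ}
    (hf : ∀ x ∈ D, HasDerivAt f (f' x) x) (hf' : ∀ x ∈ D, 0 ≤ f' x) : MonotoneOn f D :=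
  monotoneOn_of_hasDerivWithinAt_nonneg hD
    (fun x hx ↦ (hf x hx).continuousAt.continuousWithinAt)
    (fun x hx ↦ (hf x (interior_subset hx)).hasDerivWithinAt)
    (fun x hx ↦ hf' x (interior_subset hx))

/-- `N / 2` is floor division; only for even `N` does `N / 2 + 1 ≤ i` give `t_{i-1} ≥ 1/2`. -/
lemma mesh_points_mem_Icc {N i : ℕ} (hNeven : Even N) (hi1 : N / 2 + 1 ≤ i) (hi2 : i ≤ N) :
    1 - (i : ℝ) / N ∈ Icc (0 : ℝ) (1 / 2) ∧ 1 - ((i : ℝ) - 1) / N ∈ Icc (0 : ℝ) (1 / 2) ∧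
      1 - (i : ℝ) / N ≤ 1 - ((i : ℝ) - 1) / N := by
  have h2i : N + 2 ≤ 2 * i := by
    have := Nat.div_mul_cancel hNeven.two_dvd
    omega
  have hN : (0 : ℝ) < N := by exact_mod_cast (show 0 < N by omega)
  have hiN : (i : ℝ) ≤ N := by exact_mod_cast hi2
  have h2i' : (N : ℝ) + 2 ≤ 2 * i := by exact_mod_cast h2i
  have h1 : (i : ℝ) / N ≤ 1 := (div_le_one hN).2 hiN
  have h2 : (1 : ℝ) / 2 ≤ ((i : ℝ) - 1) / N := by rw [le_div_iff₀ hN]; linarith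
  have h3 : ((i : ℝ) - 1) / N ≤ (i : ℝ) / N := by gcongr; linarith
  refine ⟨⟨?_, ?_⟩, ⟨?_, ?_⟩, ?_⟩ <;> linarith

theorem theta_bound_by_psi_increment_general
    (α σ ε : ℝ) (hε : 0 < ε)
    (N : ℕ) (hNeven : Even N)
    (φ φ' : ℝ → ℝ)
    (hφderiv : ∀ t ∈ Set.Icc (0:ℝ) (1/2), HasDerivAt φ (φ' t) t)
    (hφ'pos : ∀ t ∈ Set.Icc (0:ℝ) (1/2), 0 < φ' t)
    (ψ : ℝ → ℝ) (hψ : ∀ t, ψ t = Real.exp (-φ t))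
    (i : ℕ) (hi1 : N / 2 + 1 ≤ i) (hi2 : i ≤ N) :
    min ((σ * ε / α) * (φ (1 - ((i:ℝ) - 1) / N) - φ (1 - (i:ℝ) / N)) / ε) 1
        * ψ (1 - (i:ℝ) / N)
      ≤ 2 * max (σ / α) 1 * (ψ (1 - (i:ℝ) / N) - ψ (1 - ((i:ℝ) - 1) / N)) := by
  obtain ⟨ha, hb, hab⟩ := mesh_points_mem_Icc hNeven hi1 hi2
  have hmono : MonotoneOn φ (Icc 0 (1 / 2)) :=
    monotoneOn_of_forall_hasDerivAt_nonneg (convex_Icc _ _) hφderiv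
      (fun t ht ↦ (hφ'pos t ht).le)
  have hscale : ∀ d : ℝ, σ * ε / α * d / ε = σ / α * d := fun d ↦ by
    field_simp
  rw [hscale, hψ, hψ]
  exact min_mul_sub_mul_exp_neg_le _ (hmono ha hb hab)

/-- For every index `i` with `N/2+1 ≤ i ≤ N` one has
`Θ_i ≤ 2·max{σ/α, 1}·(ψ(1 − t_i) − ψ(1 − t_{i−1}))`, where `t_i = i/N`,
`h_i = (σε/α)·(φ(1−t_{i−1}) − φ(1−t_i))`, `Θ_i = min{h_i/ε, 1}·ψ(1−t_i)`
and `ψ = exp(−φ)`. -/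
theorem theta_bound_by_psi_increment
    (α σ ε : ℝ) (hα : 0 < α) (hσ : 0 < σ) (hε : 0 < ε)
    (N : ℕ) (hN4 : 4 ≤ N) (hNeven : Even N)
    (φ φ' : ℝ → ℝ)
    (hφderiv : ∀ t ∈ Set.Icc (0:ℝ) (1/2), HasDerivAt φ (φ' t) t)
    (hφ'cont : ContinuousOn φ' (Set.Icc (0:ℝ) (1/2)))
    (hφ0 : φ 0 = 0)
    (hφ'pos : ∀ t ∈ Set.Icc (0:ℝ) (1/2), 0 < φ' t)
    (ψ : ℝ → ℝ) (hψ : ∀ t, ψ t = Real.exp (-φ t))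
    (i : ℕ) (hi1 : N / 2 + 1 ≤ i) (hi2 : i ≤ N) :
    min ((σ * ε / α) * (φ (1 - ((i:ℝ) - 1) / N) - φ (1 - (i:ℝ) / N)) / ε) 1
        * ψ (1 - (i:ℝ) / N)
      ≤ 2 * max (σ / α) 1 * (ψ (1 - (i:ℝ) / N) - ψ (1 - ((i:ℝ) - 1) / N)) :=
  theta_bound_by_psi_increment_general α σ ε hε N hNeven φ φ' hφderiv hφ'pos ψ hψ i hi1 hi2
end

section
/- On the Bakhvalov–Shishkin mesh the ratios of consecutive fine-region mesh widths are bounded below and above: there exists a constant C > 0, independent of ε and N, such that for every even integer N ≥ 4 and every index i with N/2+1 ≤ i ≤ N−1 one has C·h_i ≤ h_{i+1} ≤ h_i. -/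
/-- Upper ratio bound on logs of an arithmetic progression. -/
lemma bs_log_upper (u c : ℝ) (hu : 0 < u) (hc : 0 < c) :
    Real.log (u + 2*c) - Real.log (u + c) ≤ Real.log (u + c) - Real.log u := by
  have hB : 0 < u + c := by linarith
  have key : (u + 2*c) * u ≤ (u + c) * (u + c) := by nlinarith
  have h := Real.log_le_log (by positivity) key
  rw [Real.log_mul (by positivity) (ne_of_gt hu),
      Real.log_mul (ne_of_gt hB) (ne_of_gt hB)] at h
  linarith

/-- Lower ratio bound on logs of an arithmetic progression, valid when `c ≤ 2u`. -/
lemma bs_log_lower (u c : ℝ) (hu : 0 < u) (hc : 0 < c) (hcu : c ≤ 2*u) :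
    Real.log (u + c) - Real.log u
      ≤ 3 * (Real.log (u + 2*c) - Real.log (u + c)) := by
  have hB : 0 < u + c := by linarith
  have key : (u + c)^4 ≤ u * (u + 2*c)^3 := by
    nlinarith [mul_pos hu hc, mul_pos hc hc, sq_nonneg c, sq_nonneg u,
      mul_nonneg (mul_nonneg hu.le hc.le) hc.le,
      mul_nonneg (mul_nonneg hc.le hc.le) hc.le]
  have h := Real.log_le_log (by positivity) key
  rw [Real.log_pow, Real.log_mul (ne_of_gt hu) (by positivity), Real.log_pow] at h
  push_cast at h
  linarith

/-- On the Bakhvalov–Shishkin mesh (generated by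
`φ(t) = −ln(1 − 2(1 − 1/N)t)`) the ratios of consecutive fine-region mesh
widths are bounded below and above: there is a constant `C > 0`, independent of
`ε` and `N`, such that for every even `N ≥ 4` and every `i` with
`N/2+1 ≤ i ≤ N−1` one has `C·h_i ≤ h_{i+1} ≤ h_i`. -/
theorem bakhvalov_shishkin_mesh_ratio
    (α σ : ℝ) (hα : 0 < α) (hσ : 0 < σ) :
    ∃ C : ℝ, 0 < C ∧
      ∀ ε : ℝ, 0 < ε → ∀ N : ℕ, Even N → 4 ≤ N →
        ∀ i : ℕ, N / 2 + 1 ≤ i → i ≤ N - 1 →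
          C * ((σ * ε / α) *
                ((-Real.log (1 - 2 * (1 - 1 / (N:ℝ)) * (1 - ((i:ℝ) - 1) / N)))
                  - (-Real.log (1 - 2 * (1 - 1 / (N:ℝ)) * (1 - (i:ℝ) / N)))))
              ≤ (σ * ε / α) *
                ((-Real.log (1 - 2 * (1 - 1 / (N:ℝ)) * (1 - (i:ℝ) / N)))
                  - (-Real.log (1 - 2 * (1 - 1 / (N:ℝ)) * (1 - ((i:ℝ) + 1) / N))))
          ∧ (σ * ε / α) *
                ((-Real.log (1 - 2 * (1 - 1 / (N:ℝ)) * (1 - (i:ℝ) / N)))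
                  - (-Real.log (1 - 2 * (1 - 1 / (N:ℝ)) * (1 - ((i:ℝ) + 1) / N))))
              ≤ (σ * ε / α) *
                ((-Real.log (1 - 2 * (1 - 1 / (N:ℝ)) * (1 - ((i:ℝ) - 1) / N)))
                  - (-Real.log (1 - 2 * (1 - 1 / (N:ℝ)) * (1 - (i:ℝ) / N)))) := by
  refine ⟨1/3, by norm_num, ?_⟩
  intro ε hε N hN hN4 i hi1 hi2
  have hK : 0 < σ * ε / α := by positivity
  have hn4 : (4:ℝ) ≤ (N:ℝ) := by exact_mod_cast hN4
  have hn0 : (0:ℝ) < (N:ℝ) := by linarith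
  have hnne : (N:ℝ) ≠ 0 := ne_of_gt hn0
  -- real-valued index bound: 2*i ≥ N + 2
  have hiN : N + 2 ≤ 2 * i := by
    obtain ⟨k, hk⟩ := hN; omega
  have hiR : (N:ℝ) + 2 ≤ 2 * (i:ℝ) := by exact_mod_cast hiN
  have h1n : (0:ℝ) < 1 - 1/(N:ℝ) := by
    have h : 1/(N:ℝ) ≤ 1/4 := by
      apply div_le_div_of_nonneg_left <;> linarith
    linarith
  have hinv : 1/(N:ℝ) * (N:ℝ) = 1 := by field_simp
  -- the three mesh points and the step
  have hcpos : (0:ℝ) < 2 * (1 - 1/(N:ℝ)) / N := by positivity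
  have huge : 1/(N:ℝ) ≤ 1 - 2 * (1 - 1 / (N:ℝ)) * (1 - ((i:ℝ) - 1) / N) := by
    have expand : (1 - 2 * (1 - 1 / (N:ℝ)) * (1 - ((i:ℝ) - 1) / N)) - 1/(N:ℝ)
        = (1 - 1/(N:ℝ)) * ((2 * ((i:ℝ) - 1) - (N:ℝ)) / N) := by
      field_simp
      ring
    have h2 : 0 ≤ (2 * ((i:ℝ) - 1) - (N:ℝ)) / N := by
      apply div_nonneg _ hn0.le
      linarith
    nlinarith [mul_nonneg h1n.le h2]
  have hupos : (0:ℝ) < 1 - 2 * (1 - 1 / (N:ℝ)) * (1 - ((i:ℝ) - 1) / N) :=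
    lt_of_lt_of_le (by positivity) huge
  have hcu : 2 * (1 - 1/(N:ℝ)) / N
      ≤ 2 * (1 - 2 * (1 - 1 / (N:ℝ)) * (1 - ((i:ℝ) - 1) / N)) := by
    have h1 : 2 * (1 - 1/(N:ℝ)) / N ≤ 2 * (1/(N:ℝ)) := by
      rw [div_le_iff₀ hn0]
      nlinarith [hinv]
    linarith
  have eB : 1 - 2 * (1 - 1 / (N:ℝ)) * (1 - (i:ℝ) / N)
      = (1 - 2 * (1 - 1 / (N:ℝ)) * (1 - ((i:ℝ) - 1) / N)) + 2 * (1 - 1/(N:ℝ)) / N := by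
    field_simp
    ring
  have eC : 1 - 2 * (1 - 1 / (N:ℝ)) * (1 - ((i:ℝ) + 1) / N)
      = (1 - 2 * (1 - 1 / (N:ℝ)) * (1 - ((i:ℝ) - 1) / N))
        + 2 * (2 * (1 - 1/(N:ℝ)) / N) := by
    field_simp
    ring
  rw [eB, eC]
  have hup := bs_log_upper _ _ hupos hcpos
  have hlow := bs_log_lower _ _ hupos hcpos hcu
  have key1 : ∀ a b : ℝ, a ≤ 3 * b → 1/3 * (σ * ε / α * a) ≤ σ * ε / α * b := by
    intro a b h
    nlinarith [mul_le_mul_of_nonneg_left h hK.le]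
  constructor
  · exact key1 _ _ (by linarith)
  · exact mul_le_mul_of_nonneg_left (by linarith) hK.le
end

section
/- On the Bakhvalov-type mesh, away from the transition point the ratios of consecutive fine-region mesh widths are bounded below and above: there exists a constant C > 0, independent of ε and N, such that for every even integer N ≥ 4, every ε with 0 < Nε ≤ 1, and every index i with N/2+2 ≤ i ≤ N−1, one has C·h_i ≤ h_{i+1} ≤ h_i. -/
/-! On the fine part of the mesh the arguments `1 - 2(1 - ε)(1 - t_j)` of the logarithm form an
arithmetic progression `a, a + d, a + 2d` with `d = 2(1 - ε)/N`, so the mesh widths are `σε/α`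
times consecutive differences of `log` along it. Concavity of `log` gives `h_{i+1} ≤ h_i`.
Away from the transition point `d ≤ a`, and then `log (1 + u) ≤ u`, `log (1 - u) ≤ -u` show the
two differences agree up to the factor `(a + 2d)/a ≤ 3`, whence `C = 1/3`. -/

open Real

section LogProgression

variable {a d : ℝ}

lemma log_add_two_mul_sub_log_add_le (ha : 0 < a) (hd : 0 ≤ d) :
    log (a + 2 * d) - log (a + d) ≤ log (a + d) - log a := by
  have hprod : log ((a + 2 * d) * a) ≤ log ((a + d) * (a + d)) :=
    log_le_log (by positivity) (by nlinarith [sq_nonneg d])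
  rw [log_mul (by positivity) ha.ne', log_mul (by positivity) (by positivity)] at hprod
  linarith

lemma log_add_sub_log_le_three_mul (ha : 0 < a) (hd : 0 ≤ d) (hda : d ≤ a) :
    log (a + d) - log a ≤ 3 * (log (a + 2 * d) - log (a + d)) := by
  have hfirst : log (a + d) - log a ≤ d / a := by
    have := log_le_sub_one_of_pos (show 0 < (a + d) / a by positivity)
    rw [log_div (by positivity) ha.ne'] at this
    calc log (a + d) - log a ≤ (a + d) / a - 1 := this
      _ = d / a := by field_simp; ring
  have hsecond : d / (a + 2 * d) ≤ log (a + 2 * d) - log (a + d) := by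
    have := log_le_sub_one_of_pos (show 0 < (a + d) / (a + 2 * d) by positivity)
    rw [log_div (by positivity) (by positivity)] at this
    have hquot : (a + d) / (a + 2 * d) - 1 = -(d / (a + 2 * d)) := by field_simp; ring
    linarith
  have hratio : d / a ≤ 3 * (d / (a + 2 * d)) := by
    rw [← mul_div_assoc, div_le_div_iff₀ ha (by positivity)]
    nlinarith
  linarith

end LogProgression

lemma bakhvalov_arg_add_one (ε n x : ℝ) (hn : n ≠ 0) :
    1 - 2 * (1 - ε) * (1 - (x + 1) / n) = 1 - 2 * (1 - ε) * (1 - x / n) + 2 * (1 - ε) / n := by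
  field_simp
  ring

lemma bakhvalov_step_add_le_arg {ε n x : ℝ} (hε : ε ≤ 1) (hn : 0 < n) (hx : n + 2 ≤ 2 * x) :
    2 * (1 - ε) / n + ε ≤ 1 - 2 * (1 - ε) * (1 - x / n) := by
  have h : (1 - ε) * (n + 2) ≤ (1 - ε) * (2 * x) := mul_le_mul_of_nonneg_left hx (by linarith)
  rw [div_add' _ _ _ hn.ne', div_le_iff₀ hn]
  have hxn : x / n * n = x := div_mul_cancel₀ x hn.ne'
  nlinarith

/-- On the Bakhvalov-type mesh (generated by
`φ(t) = −ln(1 − 2(1 − ε)t)`), away from the transition point the ratios of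
consecutive fine-region mesh widths are bounded below and above: there is a
constant `C > 0`, independent of `ε` and `N`, such that for every even `N ≥ 4`,
every `ε` with `0 < Nε ≤ 1`, and every `i` with `N/2+2 ≤ i ≤ N−1` one has
`C·h_i ≤ h_{i+1} ≤ h_i`. -/
theorem bakhvalov_type_mesh_ratio
    (α σ : ℝ) (hα : 0 < α) (hσ : 0 < σ) :
    ∃ C : ℝ, 0 < C ∧
      ∀ N : ℕ, Even N → 4 ≤ N →
        ∀ ε : ℝ, 0 < ε → (N:ℝ) * ε ≤ 1 →
          ∀ i : ℕ, N / 2 + 2 ≤ i → i ≤ N - 1 →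
            C * ((σ * ε / α) *
                  ((-Real.log (1 - 2 * (1 - ε) * (1 - ((i:ℝ) - 1) / N)))
                    - (-Real.log (1 - 2 * (1 - ε) * (1 - (i:ℝ) / N)))))
                ≤ (σ * ε / α) *
                  ((-Real.log (1 - 2 * (1 - ε) * (1 - (i:ℝ) / N)))
                    - (-Real.log (1 - 2 * (1 - ε) * (1 - ((i:ℝ) + 1) / N))))
            ∧ (σ * ε / α) *
                  ((-Real.log (1 - 2 * (1 - ε) * (1 - (i:ℝ) / N)))
                    - (-Real.log (1 - 2 * (1 - ε) * (1 - ((i:ℝ) + 1) / N))))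
                ≤ (σ * ε / α) *
                  ((-Real.log (1 - 2 * (1 - ε) * (1 - ((i:ℝ) - 1) / N)))
                    - (-Real.log (1 - 2 * (1 - ε) * (1 - (i:ℝ) / N)))) := by
  refine ⟨1 / 3, by norm_num, fun N hN hN4 ε hε hNε i hi _ => ?_⟩
  have hN4' : (4 : ℝ) ≤ N := by exact_mod_cast hN4
  have hε1 : ε ≤ 1 := by nlinarith
  have hN0 : (0 : ℝ) < N := by linarith
  have hi' : (N : ℝ) + 2 ≤ 2 * ((i : ℝ) - 1) := by
    obtain ⟨m, rfl⟩ := hN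
    have h : ((m + m + 4 : ℕ) : ℝ) ≤ ((2 * i : ℕ) : ℝ) := by exact_mod_cast (by omega)
    push_cast at h ⊢
    linarith
  set a := 1 - 2 * (1 - ε) * (1 - ((i : ℝ) - 1) / N)
  set d := 2 * (1 - ε) / N
  have hb : 1 - 2 * (1 - ε) * (1 - (i : ℝ) / N) = a + d := by
    simpa using bakhvalov_arg_add_one ε N ((i : ℝ) - 1) hN0.ne'
  have hc : 1 - 2 * (1 - ε) * (1 - ((i : ℝ) + 1) / N) = a + 2 * d := by
    rw [bakhvalov_arg_add_one ε N i hN0.ne', hb]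
    ring
  have hda : d + ε ≤ a := bakhvalov_step_add_le_arg hε1 hN0 hi'
  have hd : 0 ≤ d := div_nonneg (by linarith) hN0.le
  have ha : 0 < a := by linarith
  have hk : 0 ≤ σ * ε / α := by positivity
  rw [hb, hc]
  constructor
  · have := mul_le_mul_of_nonneg_left (log_add_sub_log_le_three_mul ha hd (by linarith)) hk
    linarith
  · have := mul_le_mul_of_nonneg_left (log_add_two_mul_sub_log_add_le ha hd) hk
    linarith
end

section
/- On the Bakhvalov-type mesh the fine-region mesh widths satisfy the explicit lower bound h_{N/2+i} ≥ (σε/α)·1/(i+1) for every integer i with 1 ≤ i ≤ N/2. -/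
/-! On the fine part of the mesh the argument of `φ` at `t = (m + x)/(2m)` (with `N = 2m`) is the
affine function `(εm + (1 - ε)x)/m` of `x`, so `h_{m+i}` is `σε/α` times
`log b - log a` for two consecutive values `a < b` of it. By `log y ≥ 1 - 1/y` this is at least
`(b - a)/b = (1 - ε)/(εm + (1 - ε)i)`, and `(m + 1)ε ≤ Nε ≤ 1` makes that at least `1/(i + 1)`. -/

open Real

lemma sub_div_le_log_sub_log {a b : ℝ} (ha : 0 < a) (hb : 0 < b) :
    (b - a) / b ≤ log b - log a := by
  have h := one_sub_inv_le_log_of_pos (div_pos hb ha)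
  rwa [inv_div, one_sub_div hb.ne', log_div hb.ne' ha.ne'] at h

lemma bakhvalov_phi_arg_eq (ε m x : ℝ) (hm : m ≠ 0) :
    1 - 2 * (1 - ε) * (1 - (m + x) / (2 * m)) = (ε * m + (1 - ε) * x) / m := by
  field_simp
  ring

lemma one_div_add_one_le_bakhvalov_log_step {ε m i : ℝ} (hε : 0 < ε) (hi : 1 ≤ i) (him : i ≤ m)
    (hεm : (m + 1) * ε ≤ 1) :
    1 / (i + 1) ≤
      log ((ε * m + (1 - ε) * i) / m) - log ((ε * m + (1 - ε) * (i - 1)) / m) := by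
  have hm : 0 < m := by linarith
  have hε1 : ε < 1 := by nlinarith
  have ha : 0 < (ε * m + (1 - ε) * (i - 1)) / m := by
    have : 0 ≤ (1 - ε) * (i - 1) := mul_nonneg (by linarith) (by linarith)
    positivity
  have hb : 0 < ε * m + (1 - ε) * i := by nlinarith
  calc 1 / (i + 1) ≤ (1 - ε) / (ε * m + (1 - ε) * i) := by
        rw [div_le_div_iff₀ (by linarith) hb]
        linarith
    _ = _ := by field_simp; ring
    _ ≤ _ := sub_div_le_log_sub_log ha (div_pos hb hm)

theorem bakhvalov_type_mesh_width_lower_bound_general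
    (α σ ε : ℝ) (hα : 0 < α) (hσ : 0 < σ) (hε : 0 < ε)
    (N : ℕ) (hNeven : Even N) (hNε : (N:ℝ) * ε ≤ 1) :
    ∀ i : ℕ, 1 ≤ i → i ≤ N / 2 →
      (σ * ε / α) * (1 / ((i:ℝ) + 1))
        ≤ (σ * ε / α) *
            ((-Real.log (1 - 2 * (1 - ε) * (1 - (((N / 2 + i : ℕ):ℝ) - 1) / N)))
              - (-Real.log (1 - 2 * (1 - ε) * (1 - ((N / 2 + i : ℕ):ℝ) / N)))) := by
  intro i hi hiN
  obtain ⟨m, rfl⟩ := hNeven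
  have hhalf : (m + m) / 2 = m := by omega
  have him : (i : ℝ) ≤ m := by exact_mod_cast hhalf ▸ hiN
  have hi' : (1 : ℝ) ≤ i := by exact_mod_cast hi
  have hm : (m : ℝ) ≠ 0 := by linarith
  rw [hhalf]
  push_cast at hNε ⊢
  rw [show (m : ℝ) + m = 2 * m by ring, show (m : ℝ) + i - 1 = m + (i - 1) by ring,
    bakhvalov_phi_arg_eq ε m _ hm, bakhvalov_phi_arg_eq ε m _ hm, neg_sub_neg]
  refine mul_le_mul_of_nonneg_left ?_ (by positivity)
  exact one_div_add_one_le_bakhvalov_log_step hε hi' him (by nlinarith)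

/-- On the Bakhvalov-type mesh (generated by
`φ(t) = −ln(1 − 2(1 − ε)t)`) the fine-region mesh widths satisfy the explicit
lower bound `h_{N/2+i} ≥ (σε/α)·1/(i+1)` for every integer `1 ≤ i ≤ N/2`. -/
theorem bakhvalov_type_mesh_width_lower_bound
    (α σ ε : ℝ) (hα : 0 < α) (hσ : 0 < σ) (hε : 0 < ε)
    (N : ℕ) (hNeven : Even N) (hN4 : 4 ≤ N) (hNε : (N:ℝ) * ε ≤ 1) :
    ∀ i : ℕ, 1 ≤ i → i ≤ N / 2 →
      (σ * ε / α) * (1 / ((i:ℝ) + 1))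
        ≤ (σ * ε / α) *
            ((-Real.log (1 - 2 * (1 - ε) * (1 - (((N / 2 + i : ℕ):ℝ) - 1) / N)))
              - (-Real.log (1 - 2 * (1 - ε) * (1 - ((N / 2 + i : ℕ):ℝ) / N)))) :=
  bakhvalov_type_mesh_width_lower_bound_general α σ ε hα hσ hε N hNeven hNε
end

section
/- Let H be a real inner product space, let a, b ∈ H, let θ be a real number with 1/2 ≤ θ ≤ 1, and let r ≥ 0. If ⟨a − b, θa + (1 − θ)b⟩ ≤ r·‖θa + (1 − θ)b‖, then ‖a‖ ≤ ‖b‖ + r. -/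
/-! Writing `θ • a + (1 - θ) • b = (a + b) / 2 + (θ - 1/2) • (a - b)` gives
`⟪a - b, θ • a + (1 - θ) • b⟫ = (‖a‖² - ‖b‖²) / 2 + (θ - 1/2) ‖a - b‖²`, and since
`θ ≥ 1/2` and `‖a - b‖ ≥ ‖a‖ - ‖b‖` this is at least `(‖a‖ - ‖b‖) (θ ‖a‖ + (1 - θ) ‖b‖)`.
The right-hand side of the hypothesis is at most `r (θ ‖a‖ + (1 - θ) ‖b‖)` by convexity
of the norm, and cancelling the common positive factor gives `‖a‖ - ‖b‖ ≤ r`. -/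

section ThetaCombination

open scoped InnerProductSpace

variable {H : Type*} [NormedAddCommGroup H] [InnerProductSpace ℝ H]

theorem real_inner_sub_smul_add_one_sub_smul (a b : H) (θ : ℝ) :
    ⟪a - b, θ • a + (1 - θ) • b⟫_ℝ = (‖a‖ ^ 2 - ‖b‖ ^ 2) / 2 + (θ - 1 / 2) * ‖a - b‖ ^ 2 := by
  rw [norm_sub_sq_real]
  simp only [inner_sub_left, inner_add_right, real_inner_smul_right,
    real_inner_self_eq_norm_sq, real_inner_comm b a]
  ring

theorem norm_sub_norm_mul_le_real_inner_sub_smul_add_one_sub_smul (a b : H) {θ : ℝ}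
    (hθ : 1 / 2 ≤ θ) :
    (‖a‖ - ‖b‖) * (θ * ‖a‖ + (1 - θ) * ‖b‖) ≤ ⟪a - b, θ • a + (1 - θ) • b⟫_ℝ := by
  have hsq : (‖a‖ - ‖b‖) ^ 2 ≤ ‖a - b‖ ^ 2 := sq_le_sq.mpr <| by
    simpa only [abs_norm] using abs_norm_sub_norm_le a b
  calc (‖a‖ - ‖b‖) * (θ * ‖a‖ + (1 - θ) * ‖b‖)
      = (‖a‖ ^ 2 - ‖b‖ ^ 2) / 2 + (θ - 1 / 2) * (‖a‖ - ‖b‖) ^ 2 := by ring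
    _ ≤ (‖a‖ ^ 2 - ‖b‖ ^ 2) / 2 + (θ - 1 / 2) * ‖a - b‖ ^ 2 := by gcongr
    _ = ⟪a - b, θ • a + (1 - θ) • b⟫_ℝ := (real_inner_sub_smul_add_one_sub_smul a b θ).symm

theorem norm_smul_add_one_sub_smul_le (a b : H) {θ : ℝ} (hθ₀ : 0 ≤ θ) (hθ₁ : θ ≤ 1) :
    ‖θ • a + (1 - θ) • b‖ ≤ θ * ‖a‖ + (1 - θ) * ‖b‖ :=
  convexOn_univ_norm.2 trivial trivial hθ₀ (sub_nonneg.mpr hθ₁) (by ring)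

end ThetaCombination

/-- In a real inner product space, for `a, b`, `1/2 ≤ θ ≤ 1` and
`r ≥ 0`: if `⟨a − b, θa + (1 − θ)b⟩ ≤ r·‖θa + (1 − θ)b‖`, then
`‖a‖ ≤ ‖b‖ + r`. -/
theorem theta_scheme_norm_bound
    {H : Type*} [NormedAddCommGroup H] [InnerProductSpace ℝ H]
    (a b : H) (θ : ℝ) (hθ1 : 1/2 ≤ θ) (hθ2 : θ ≤ 1) (r : ℝ) (hr : 0 ≤ r)
    (h : (inner ℝ (a - b) (θ • a + (1 - θ) • b) : ℝ)
          ≤ r * ‖θ • a + (1 - θ) • b‖) :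
    ‖a‖ ≤ ‖b‖ + r := by
  set s := θ * ‖a‖ + (1 - θ) * ‖b‖
  have hmul : (‖a‖ - ‖b‖) * s ≤ r * s :=
    (norm_sub_norm_mul_le_real_inner_sub_smul_add_one_sub_smul a b hθ1).trans <|
      h.trans (mul_le_mul_of_nonneg_left (norm_smul_add_one_sub_smul_le a b (by linarith) hθ2) hr)
  by_contra! hlt
  have ha : 0 < ‖a‖ := by linarith [norm_nonneg b]
  have hs : 0 < s :=
    add_pos_of_pos_of_nonneg (mul_pos (by linarith) ha) (mul_nonneg (by linarith) (norm_nonneg b))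
  linarith [le_of_mul_le_mul_right hmul hs]
end

section
/- Let a < b be real numbers, let f : ℝ → ℝ be three times differentiable on [a, b], let M₂ = sup_{t ∈ [a,b]} |f″(t)| and M₃ = sup_{t ∈ [a,b]} |f‴(t)| be finite, and let θ be a real number with 1/2 ≤ θ ≤ 1. Then the truncation error of the θ-scheme satisfies |θ·f′(b) + (1 − θ)·f′(a) − (f(b) − f(a))/(b − a)| ≤ (θ − 1/2)·(b − a)·M₂ + ((1 − θ)/2 + 1/6)·(b − a)²·M₃. -/
/-!
With `h = b - a`, Taylor's formula around `b` gives `f a = f b - h f' b + h²/2 f'' b + R₃` and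
`f' a = f' b - h f'' b + R₂` with `|R₃| ≤ M₃ h³/6` and `|R₂| ≤ M₃ h²/2`. Substituting, the terms in
`f' b` cancel and the truncation error is exactly `(θ - 1/2) h f'' b + (1 - θ) R₂ + R₃ / h`.
The Taylor bounds compare the remainder with `C (t - a)ⁿ⁺¹/(n + 1)` by the mean value inequality;
those around the right endpoint follow from those around the left one by the reflection
`t ↦ a + b - t`.
-/

open Set

lemma abs_le_of_abs_deriv_le_mul_pow {φ φ' : ℝ → ℝ} {a b C : ℝ} (n : ℕ) (hab : a ≤ b)
    (hφ : ∀ t ∈ Icc a b, HasDerivAt φ (φ' t) t) (hφa : φ a = 0)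
    (hφ' : ∀ t ∈ Icc a b, |φ' t| ≤ C * (t - a) ^ n) :
    |φ b| ≤ C * (b - a) ^ (n + 1) / (n + 1) := by
  have hB : ∀ t, HasDerivAt (fun t => C * (t - a) ^ (n + 1) / (n + 1)) (C * (t - a) ^ n) t := by
    intro t
    refine ((((hasDerivAt_id t).sub_const a).pow (n + 1)).const_mul C).div_const ((n : ℝ) + 1)
      |>.congr_deriv ?_
    simp only [id_eq, Nat.add_sub_cancel, Nat.cast_add_one]
    field_simp
  exact image_norm_le_of_norm_deriv_right_le_deriv_boundary
    (fun t ht => (hφ t ht).continuousAt.continuousWithinAt)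
    (fun t ht => (hφ t (Ico_subset_Icc_self ht)).hasDerivWithinAt)
    (by simp [hφa]) hB (fun t ht => hφ' t (Ico_subset_Icc_self ht)) (right_mem_Icc.2 hab)

section Taylor

variable {g g' g'' g''' : ℝ → ℝ} {a b C : ℝ}

lemma abs_taylor_one_le (hab : a ≤ b)
    (hg : ∀ t ∈ Icc a b, HasDerivAt g (g' t) t)
    (hg' : ∀ t ∈ Icc a b, HasDerivAt g' (g'' t) t)
    (hC : ∀ t ∈ Icc a b, |g'' t| ≤ C) :
    |g b - g a - (b - a) * g' a| ≤ C * (b - a) ^ 2 / 2 := by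
  have hdiff : ∀ t ∈ Icc a b, |g' t - g' a| ≤ C * (t - a) ^ 1 := fun t ht => by
    simpa using abs_le_of_abs_deriv_le_mul_pow (φ := fun s => g' s - g' a) 0 ht.1
      (fun s hs => (hg' s ⟨hs.1, hs.2.trans ht.2⟩).sub_const _) (sub_self _)
      (fun s hs => by simpa using hC s ⟨hs.1, hs.2.trans ht.2⟩)
  have := abs_le_of_abs_deriv_le_mul_pow (φ := fun t => g t - g a - (t - a) * g' a) 1 hab
    (fun t ht => (((hg t ht).sub_const _).sub
      (((hasDerivAt_id t).sub_const a).mul_const (g' a))).congr_deriv (by simp))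
    (by simp) hdiff
  norm_num at this
  exact this

lemma abs_taylor_two_le (hab : a ≤ b)
    (hg : ∀ t ∈ Icc a b, HasDerivAt g (g' t) t)
    (hg' : ∀ t ∈ Icc a b, HasDerivAt g' (g'' t) t)
    (hg'' : ∀ t ∈ Icc a b, HasDerivAt g'' (g''' t) t)
    (hC : ∀ t ∈ Icc a b, |g''' t| ≤ C) :
    |g b - g a - (b - a) * g' a - (b - a) ^ 2 / 2 * g'' a| ≤ C * (b - a) ^ 3 / 6 := by
  have hdiff : ∀ t ∈ Icc a b, |g' t - g' a - (t - a) * g'' a| ≤ C / 2 * (t - a) ^ 2 :=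
    fun t ht => by
      have := abs_taylor_one_le ht.1 (fun s hs => hg' s ⟨hs.1, hs.2.trans ht.2⟩)
        (fun s hs => hg'' s ⟨hs.1, hs.2.trans ht.2⟩) (fun s hs => hC s ⟨hs.1, hs.2.trans ht.2⟩)
      linarith
  have hderiv : ∀ t ∈ Icc a b,
      HasDerivAt (fun t => g t - g a - (t - a) * g' a - (t - a) ^ 2 / 2 * g'' a)
        (g' t - g' a - (t - a) * g'' a) t := fun t ht => by
    refine ((((hg t ht).sub_const _).sub (((hasDerivAt_id t).sub_const a).mul_const (g' a))).sub
      (((((hasDerivAt_id t).sub_const a).pow 2).div_const 2).mul_const (g'' a))).congr_deriv ?_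
    simp only [id_eq]
    ring
  have := abs_le_of_abs_deriv_le_mul_pow 2 hab hderiv (by simp) hdiff
  norm_num at this
  linarith

lemma add_sub_mem_Icc {t : ℝ} (ht : t ∈ Icc a b) : a + b - t ∈ Icc a b :=
  ⟨by linarith [ht.2], by linarith [ht.1]⟩

lemma hasDerivAt_comp_reflect (hg : ∀ t ∈ Icc a b, HasDerivAt g (g' t) t) :
    ∀ t ∈ Icc a b, HasDerivAt (fun s => g (a + b - s)) (-g' (a + b - t)) t := fun t ht =>
  (hg _ (add_sub_mem_Icc ht)).comp_const_sub (a + b) t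

lemma abs_taylor_one_le_rev (hab : a ≤ b)
    (hg : ∀ t ∈ Icc a b, HasDerivAt g (g' t) t)
    (hg' : ∀ t ∈ Icc a b, HasDerivAt g' (g'' t) t)
    (hC : ∀ t ∈ Icc a b, |g'' t| ≤ C) :
    |g a - g b + (b - a) * g' b| ≤ C * (b - a) ^ 2 / 2 := by
  have := abs_taylor_one_le hab (hasDerivAt_comp_reflect hg)
    (fun t ht => (hasDerivAt_comp_reflect hg' t ht).neg)
    (fun t ht => by simpa using hC _ (add_sub_mem_Icc ht))
  simpa [sub_neg_eq_add] using this

lemma abs_taylor_two_le_rev (hab : a ≤ b)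
    (hg : ∀ t ∈ Icc a b, HasDerivAt g (g' t) t)
    (hg' : ∀ t ∈ Icc a b, HasDerivAt g' (g'' t) t)
    (hg'' : ∀ t ∈ Icc a b, HasDerivAt g'' (g''' t) t)
    (hC : ∀ t ∈ Icc a b, |g''' t| ≤ C) :
    |g a - g b + (b - a) * g' b - (b - a) ^ 2 / 2 * g'' b| ≤ C * (b - a) ^ 3 / 6 := by
  have := abs_taylor_two_le hab (hasDerivAt_comp_reflect hg)
    (fun t ht => (hasDerivAt_comp_reflect hg' t ht).neg.congr_deriv (neg_neg _))
    (hasDerivAt_comp_reflect hg'') (fun t ht => by simpa using hC _ (add_sub_mem_Icc ht))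
  simpa [sub_neg_eq_add] using this

end Taylor

/-- Truncation error of the θ-scheme. Let `a < b`, let `f` be
three times differentiable on `[a,b]` with derivatives `f'`, `f''`, `f'''`, let
`M₂ = sup_{[a,b]} |f''|` and `M₃ = sup_{[a,b]} |f'''|` be finite, and let
`1/2 ≤ θ ≤ 1`. Then
`|θf'(b) + (1 − θ)f'(a) − (f(b) − f(a))/(b − a)|
  ≤ (θ − 1/2)(b − a)M₂ + ((1 − θ)/2 + 1/6)(b − a)²M₃`. -/
theorem theta_scheme_truncation_error
    (a b : ℝ) (hab : a < b) (f f' f'' f''' : ℝ → ℝ)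
    (h1 : ∀ t ∈ Set.Icc a b, HasDerivAt f (f' t) t)
    (h2 : ∀ t ∈ Set.Icc a b, HasDerivAt f' (f'' t) t)
    (h3 : ∀ t ∈ Set.Icc a b, HasDerivAt f'' (f''' t) t)
    (hM₂ : BddAbove ((fun t => |f'' t|) '' Set.Icc a b))
    (hM₃ : BddAbove ((fun t => |f''' t|) '' Set.Icc a b))
    (θ : ℝ) (hθ1 : 1/2 ≤ θ) (hθ2 : θ ≤ 1) :
    |θ * f' b + (1 - θ) * f' a - (f b - f a) / (b - a)|
      ≤ (θ - 1/2) * (b - a) * sSup ((fun t => |f'' t|) '' Set.Icc a b)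
        + ((1 - θ)/2 + 1/6) * (b - a)^2
            * sSup ((fun t => |f''' t|) '' Set.Icc a b) := by
  set M₂ := sSup ((fun t => |f'' t|) '' Icc a b)
  set M₃ := sSup ((fun t => |f''' t|) '' Icc a b)
  set h := b - a
  have hpos : 0 < h := sub_pos.2 hab
  have hf''b : |f'' b| ≤ M₂ := le_csSup hM₂ ⟨b, right_mem_Icc.2 hab.le, rfl⟩
  have hM₃' : ∀ t ∈ Icc a b, |f''' t| ≤ M₃ := fun t ht => le_csSup hM₃ ⟨t, ht, rfl⟩
  set R₂ := f' a - f' b + h * f'' b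
  set R₃ := f a - f b + h * f' b - h ^ 2 / 2 * f'' b
  have hR₂ : |R₂| ≤ M₃ * h ^ 2 / 2 := abs_taylor_one_le_rev hab.le h2 h3 hM₃'
  have hR₃ : |R₃ / h| ≤ M₃ * h ^ 2 / 6 := by
    rw [abs_div, abs_of_pos hpos, div_le_iff₀ hpos]
    linarith [abs_taylor_two_le_rev hab.le h1 h2 h3 hM₃']
  have herror : θ * f' b + (1 - θ) * f' a - (f b - f a) / h
      = (θ - 1/2) * h * f'' b + (1 - θ) * R₂ + R₃ / h := by
    field_simp
    ring
  rw [herror]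
  calc |(θ - 1/2) * h * f'' b + (1 - θ) * R₂ + R₃ / h|
      ≤ |(θ - 1/2) * h * f'' b| + |(1 - θ) * R₂| + |R₃ / h| := abs_add_three _ _ _
    _ ≤ (θ - 1/2) * h * M₂ + (1 - θ) * (M₃ * h ^ 2 / 2) + M₃ * h ^ 2 / 6 := by
      rw [abs_mul, abs_mul, abs_mul, abs_of_nonneg (sub_nonneg.2 hθ1), abs_of_pos hpos,
        abs_of_nonneg (sub_nonneg.2 hθ2)]
      gcongr
    _ = _ := by ring
end
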